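/- arXiv:math/0504449 — 3 statements merged into one kernel-verified Lean document; each statement's English description precedes it below -/
import Mathlib

section
/- Let s ≥ 3 be an integer and set r = 2s. Let U_0 = {1, 2, …, s}. Then the product over all unordered pairs {a, b} of distinct elements of U_0 of 16·sin²(π(a−b)/r)·sin²(π(a+b)/r) equals r^{s−1}. -/
/-!
Write `g c = 4 sin²(πc/2s) = |1 - ζ^c|²` with `ζ = exp(πi/s)`, so the product is
`P = ∏_{a<b} g(b-a) g(b+a)`. For fixed `b` the factors `g(b-a)`, `g(b+a)` (`a < b`) together
with `g b` run over `g 1, …, g(2b-1)`, so `P · ∏_{b≤s} g b = ∏_{b≤s} ∏_{0<c<2b} g c`. As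
`g(2s-c) = g c`, the inner products for `b` and `s+1-b` combine to `∏_{0<c<2s} g c · g(2b-1)`.
The cyclotomic identity `∏_{0<k<n} (1 - ζ_n^k) = n` gives `∏_{0<c<2s} g c = 4s²` and
`∏_{0<k<s} g(2k) = s²`, hence `∏_{k<s} g(2k+1) = 4`; the same symmetry gives
`(∏_{b≤s} g b)² = 4s² · g s = 16s²`. Comparing squares, `P² = (2s)^(2s-2)`, and `P ≥ 0`.
-/

open Real Finset

section SymmetricProducts

variable {M : Type*} [CommMonoid M] (g : ℕ → M)

theorem prod_Ico_one_two_mul (n : ℕ) :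
    ∏ c ∈ Ico 1 (2 * n), g c = (∏ k ∈ Ico 1 n, g (2 * k)) * ∏ k ∈ range n, g (2 * k + 1) := by
  induction n with
  | zero => simp
  | succ n ih =>
    rcases n.eq_zero_or_pos with rfl | hn
    · simp
    rw [show 2 * (n + 1) = 2 * n + 1 + 1 by ring, prod_Ico_succ_top (by omega),
      prod_Ico_succ_top (by omega), ih, prod_Ico_succ_top hn, prod_range_succ]
    ac_rfl

theorem prod_Ico_sub_mul_add_mul {b : ℕ} (hb : 0 < b) :
    (∏ a ∈ Ico 1 b, g (b - a) * g (b + a)) * g b = ∏ c ∈ Ico 1 (2 * b), g c := by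
  have hsub : ∏ a ∈ Ico 1 b, g (b - a) = ∏ c ∈ Ico 1 b, g c := by
    rw [prod_Ico_reflect g 1 (by omega), Nat.add_sub_cancel_left, Nat.add_sub_cancel]
  have hadd : ∏ a ∈ Ico 1 b, g (b + a) = ∏ c ∈ Ico (b + 1) (2 * b), g c := by
    simp_rw [add_comm b, prod_Ico_add', two_mul]
  rw [prod_mul_distrib, hsub, hadd, mul_right_comm, ← prod_Ico_succ_top hb,
    prod_Ico_consecutive _ (by omega) (by omega)]

variable {g} {N : ℕ}

theorem prod_Ico_mul_prod_Ico_of_symm (hg : ∀ c ≤ N, g (N - c) = g c) {m : ℕ} (hm : 0 < m)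
    (hmN : m ≤ N) :
    (∏ c ∈ Ico 1 (m + 1), g c) * ∏ c ∈ Ico 1 (N + 1 - m), g c = (∏ c ∈ Ico 1 N, g c) * g m := by
  have hrefl : ∏ c ∈ Ico 1 (N + 1 - m), g c = ∏ c ∈ Ico m N, g c := by
    rw [← prod_congr rfl fun c hc => hg c (by rw [mem_Ico] at hc; omega),
      prod_Ico_reflect g 1 (by omega), Nat.sub_sub_self (by omega), Nat.add_sub_cancel]
  rw [hrefl, prod_Ico_succ_top hm, mul_right_comm, prod_Ico_consecutive _ hm hmN]

theorem sq_prod_Ico_of_symm (hg : ∀ c ≤ 2 * N, g (2 * N - c) = g c) (hN : 0 < N) :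
    (∏ c ∈ Ico 1 (N + 1), g c) ^ 2 = (∏ c ∈ Ico 1 (2 * N), g c) * g N := by
  rw [sq, ← prod_Ico_mul_prod_Ico_of_symm hg hN (by omega)]
  congr 3
  omega

theorem sq_prod_pairs_mul_prod_Ico_of_symm (hg : ∀ c ≤ 2 * N, g (2 * N - c) = g c) :
    ((∏ b ∈ Ico 1 (N + 1), ∏ a ∈ Ico 1 b, g (b - a) * g (b + a)) * ∏ b ∈ Ico 1 (N + 1), g b) ^ 2 =
      (∏ c ∈ Ico 1 (2 * N), g c) ^ N * ∏ k ∈ range N, g (2 * k + 1) := by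
  have htel : (∏ b ∈ Ico 1 (N + 1), ∏ a ∈ Ico 1 b, g (b - a) * g (b + a)) *
      ∏ b ∈ Ico 1 (N + 1), g b = ∏ k ∈ range N, ∏ c ∈ Ico 1 (2 * k + 1 + 1), g c := by
    rw [← prod_mul_distrib, prod_Ico_eq_prod_range, Nat.add_sub_cancel]
    refine prod_congr rfl fun k _ => ?_
    rw [prod_Ico_sub_mul_add_mul g (by omega)]
    congr 2
    ring
  rw [htel, sq]
  nth_rw 2 [← prod_range_reflect]
  rw [← prod_mul_distrib]
  calc _ = ∏ k ∈ range N, (∏ c ∈ Ico 1 (2 * N), g c) * g (2 * k + 1) := by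
        refine prod_congr rfl fun k hk => ?_
        have hk : k < N := mem_range.1 hk
        rw [show 2 * (N - 1 - k) + 1 + 1 = 2 * N + 1 - (2 * k + 1) by omega]
        exact prod_Ico_mul_prod_Ico_of_symm hg (by omega) (by omega)
    _ = _ := by rw [prod_mul_distrib, prod_const, card_range]

end SymmetricProducts

noncomputable def chordSq (N c : ℕ) : ℝ := 4 * sin (π * c / N) ^ 2

namespace chordSq

theorem nonneg (N c : ℕ) : 0 ≤ chordSq N c := by
  unfold chordSq; positivity

theorem eq_norm_one_sub_pow_sq (N c : ℕ) :
    chordSq N c = ‖1 - Complex.exp (2 * π * Complex.I / N) ^ c‖ ^ 2 := by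
  rw [norm_sub_rev, ← Complex.exp_nat_mul,
    show (c : ℂ) * (2 * π * Complex.I / N) = Complex.I * ((2 * π * c / N : ℝ) : ℂ) by
      push_cast; ring,
    Complex.norm_exp_I_mul_ofReal_sub_one, norm_mul, Real.norm_eq_abs, Real.norm_eq_abs,
    mul_pow, sq_abs, chordSq]
  norm_num
  ring_nf

theorem prod_Ico {n : ℕ} (hn : n ≠ 0) : ∏ k ∈ Ico 1 n, chordSq n k = n ^ 2 := by
  obtain ⟨m, rfl⟩ := Nat.exists_eq_add_one_of_ne_zero hn
  rw [prod_Ico_eq_prod_range, Nat.add_sub_cancel]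
  simp_rw [eq_norm_one_sub_pow_sq, add_comm 1]
  rw [prod_pow, ← norm_prod, (Complex.isPrimitiveRoot_exp (m + 1) hn).prod_one_sub_pow_eq_order,
    ← Nat.cast_succ, Complex.norm_natCast]

theorem self_sub {N c : ℕ} (hc : c ≤ N) : chordSq N (N - c) = chordSq N c := by
  rcases Nat.eq_zero_or_pos N with rfl | hN
  · simp [chordSq]
  rw [chordSq, chordSq, Nat.cast_sub hc,
    show π * (N - c : ℝ) / N = π - π * c / N by field_simp, sin_pi_sub]

theorem two_mul_two_mul (n k : ℕ) : chordSq (2 * n) (2 * k) = chordSq n k := by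
  rw [chordSq, chordSq, Nat.cast_mul, Nat.cast_mul, Nat.cast_ofNat, mul_left_comm,
    mul_div_mul_left _ _ two_ne_zero]

theorem two_mul_self {n : ℕ} (hn : n ≠ 0) : chordSq (2 * n) n = 4 := by
  rw [chordSq, Nat.cast_mul, Nat.cast_ofNat,
    show π * n / (2 * n) = π / 2 by field_simp, sin_pi_div_two]
  norm_num

theorem prod_range_two_mul_add_one {n : ℕ} (hn : n ≠ 0) :
    ∏ k ∈ range n, chordSq (2 * n) (2 * k + 1) = 4 := by
  have h := prod_Ico_one_two_mul (chordSq (2 * n)) n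
  simp_rw [two_mul_two_mul, prod_Ico hn, prod_Ico (mul_ne_zero two_ne_zero hn)] at h
  have hn' : ((n : ℝ) ^ 2) ≠ 0 := by positivity
  refine mul_left_cancel₀ hn' ?_
  rw [← h]
  push_cast
  ring

end chordSq

theorem prod_sin_sq_pairs_eq_prod_chordSq (s : ℕ) :
    ∏ p ∈ (Icc 1 s).offDiag.filter (fun p => p.1 < p.2),
        (16 * sin (π * ((p.1 : ℝ) - (p.2 : ℝ)) / (2 * s)) ^ 2 *
          sin (π * ((p.1 : ℝ) + (p.2 : ℝ)) / (2 * s)) ^ 2) =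
      ∏ b ∈ Ico 1 (s + 1), ∏ a ∈ Ico 1 b, chordSq (2 * s) (b - a) * chordSq (2 * s) (b + a) := by
  rw [prod_finset_product_right _ (Ico 1 (s + 1)) (fun b => Ico 1 b)
    (fun p => by simp only [mem_filter, mem_offDiag, mem_Icc, mem_Ico]; omega)]
  refine prod_congr rfl fun b _ => prod_congr rfl fun a ha => ?_
  have hab : a ≤ b := (mem_Ico.1 ha).2.le
  rw [chordSq, chordSq, Nat.cast_sub hab, ← neg_sub, mul_neg, neg_div, sin_neg, neg_sq]
  push_cast
  ring_nf

theorem prod_chordSq_pairs {s : ℕ} (hs : s ≠ 0) :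
    ∏ b ∈ Ico 1 (s + 1), ∏ a ∈ Ico 1 b, chordSq (2 * s) (b - a) * chordSq (2 * s) (b + a) =
      (2 * s : ℝ) ^ (s - 1) := by
  set P := ∏ b ∈ Ico 1 (s + 1), ∏ a ∈ Ico 1 b, chordSq (2 * s) (b - a) * chordSq (2 * s) (b + a)
  have hP : 0 ≤ P := prod_nonneg fun b _ => prod_nonneg fun a _ =>
    mul_nonneg (chordSq.nonneg _ _) (chordSq.nonneg _ _)
  have hsymm : ∀ c ≤ 2 * s, chordSq (2 * s) (2 * s - c) = chordSq (2 * s) c :=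
    fun _ => chordSq.self_sub
  have hPQ := sq_prod_pairs_mul_prod_Ico_of_symm hsymm
  have hQ := sq_prod_Ico_of_symm hsymm (Nat.pos_of_ne_zero hs)
  rw [mul_pow, hQ, chordSq.prod_Ico (mul_ne_zero two_ne_zero hs),
    chordSq.prod_range_two_mul_add_one hs, chordSq.two_mul_self hs] at hPQ
  obtain ⟨t, rfl⟩ := Nat.exists_eq_add_one_of_ne_zero hs
  refine (pow_left_inj₀ hP (by positivity) two_ne_zero).1 ?_
  have hs' : ((((2 * (t + 1) : ℕ) : ℝ) ^ 2) * 4) ≠ 0 := by positivity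
  refine mul_right_cancel₀ hs' ?_
  rw [hPQ, Nat.add_sub_cancel, pow_succ, ← pow_mul, ← pow_mul, mul_comm 2 t]
  push_cast
  ring

theorem verlinde_Ds_U0_general (s : ℕ) :
    (∏ p ∈ (Finset.Icc 1 s).offDiag.filter (fun p => p.1 < p.2),
        (16 * Real.sin (Real.pi * ((p.1 : ℝ) - (p.2 : ℝ)) / (2 * s)) ^ 2 *
          Real.sin (Real.pi * ((p.1 : ℝ) + (p.2 : ℝ)) / (2 * s)) ^ 2)) =
      (2 * (s : ℝ)) ^ (s - 1) := by
  rcases eq_or_ne s 0 with rfl | hs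
  · simp
  rw [prod_sin_sq_pairs_eq_prod_chordSq, prod_chordSq_pairs hs]

/-- For `s ≥ 3`, `r = 2s`, the product over unordered pairs `{a,b}` of
distinct elements of `U_0 = {1,…,s}` of `16·sin²(π(a−b)/r)·sin²(π(a+b)/r)`
equals `r^(s−1)`. -/
theorem verlinde_Ds_U0 (s : ℕ) (hs : 3 ≤ s) :
    (∏ p ∈ (Finset.Icc 1 s).offDiag.filter (fun p => p.1 < p.2),
        (16 * Real.sin (Real.pi * ((p.1 : ℝ) - (p.2 : ℝ)) / (2 * s)) ^ 2 *
          Real.sin (Real.pi * ((p.1 : ℝ) + (p.2 : ℝ)) / (2 * s)) ^ 2)) =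
      (2 * (s : ℝ)) ^ (s - 1) :=
  verlinde_Ds_U0_general s
end

section
/- Let s ≥ 3 be an integer and set r = 2s. Let U_s = {0, 1, …, s−1}. Then the product over all unordered pairs {a, b} of distinct elements of U_s of 16·sin²(π(a−b)/r)·sin²(π(a+b)/r) equals r^{s−1}. -/
/-!
Write `chord n k = 2 |sin (π k / n)|` for the distance between the vertices `ζ^j` and `ζ^(j+k)` of
the regular `n`-gon, `ζ = exp (2π i / n)`, and put `n = 2s`. Each factor of the product is
`chord (a - b)² chord (a + b)²`, so the product over unordered pairs is the product over ordered
pairs `a ≠ b` of `chord (a - b) chord (a + b)`, i.e. the product of the row products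
`R a = ∏_{b ≠ a} chord (a - b) chord (a + b)`. Since `chord (a + b)` is the distance from `ζ^a` to
the conjugate `ζ^(-b)`, the row `R a` is, up to a few boundary chords, the product of all chords
from `ζ^a`, which is `n` (the derivative of `X^n - 1` at `ζ^a`). This gives `R 0 = s` and
`R a = 2s / chord (a + s)²` for `0 < a < s`, and the same count from the vertex `-1 = ζ^s` gives
`∏_{0<a<s} chord (a + s)² = s`.
-/

open Real Finset

namespace Finset

variable {α M : Type*} [CommMonoid M]

theorem prod_offDiag_eq_prod_prod_erase [DecidableEq α] (s : Finset α) (f : α × α → M) :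
    ∏ p ∈ s.offDiag, f p = ∏ a ∈ s, ∏ b ∈ s.erase a, f (a, b) :=
  prod_finset_product _ _ _ fun p => by rw [mem_offDiag, mem_erase]; tauto

theorem prod_offDiag_filter_lt_mul_swap [LinearOrder α] (s : Finset α) (f : α × α → M) :
    ∏ p ∈ s.offDiag with p.1 < p.2, f p * f p.swap = ∏ p ∈ s.offDiag, f p := by
  rw [prod_mul_distrib, ← prod_filter_mul_prod_filter_not s.offDiag (fun p => p.1 < p.2)]
  congr 1
  apply prod_nbij' Prod.swap Prod.swap <;> intro p <;> simp <;> grind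

end Finset

theorem IsPrimitiveRoot.prod_pow_sub_pow_erase {R : Type*} [CommRing R] [IsDomain R] {ζ : R}
    {n a : ℕ} (hζ : IsPrimitiveRoot ζ n) (ha : a < n) :
    ∏ k ∈ (range n).erase a, (ζ ^ a - ζ ^ k) = n * (ζ ^ a) ^ (n - 1) := by
  have hnodal : Lagrange.nodal (range n) (ζ ^ ·) = .X ^ n - .C 1 := by
    simpa [Lagrange.nodal_eq] using (X_pow_sub_C_eq_prod hζ (by omega) (one_pow n)).symm
  have := Lagrange.eval_nodal_derivative_eval_node_eq (v := (ζ ^ ·)) (mem_range.2 ha)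
  simpa [hnodal, Lagrange.eval_nodal, Polynomial.derivative_X_pow] using this.symm

noncomputable def chord (n : ℕ) (k : ℤ) : ℝ := 2 * |sin (π * k / n)|

theorem chord_neg (n : ℕ) (k : ℤ) : chord n (-k) = chord n k := by
  simp [chord, mul_neg, neg_div, sin_neg, abs_neg]

theorem chord_sub_self (n : ℕ) (k : ℤ) : chord n (k - n) = chord n k := by
  rcases eq_or_ne n 0 with rfl | hn
  · simp
  have : π * ((k - n : ℤ) : ℝ) / n = π * k / n - π := by push_cast; field_simp
  rw [chord, this, sin_sub_pi, abs_neg, chord]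

theorem chord_pos {n : ℕ} {k : ℤ} (hk₀ : 0 < k) (hkn : k < n) : 0 < chord n k := by
  have hn : (0 : ℝ) < n := by exact_mod_cast hk₀.trans hkn
  have hk : (k : ℝ) < n := by exact_mod_cast hkn
  have : 0 < sin (π * k / n) := by
    apply sin_pos_of_pos_of_lt_pi (by positivity)
    rw [div_lt_iff₀ hn]
    nlinarith [pi_pos]
  unfold chord
  positivity

theorem sq_chord (n : ℕ) (k : ℤ) : chord n k ^ 2 = 4 * sin (π * k / n) ^ 2 := by
  rw [chord, mul_pow, sq_abs]
  norm_num

theorem chord_sub_mul_chord_add_mul_swap (n : ℕ) (a b : ℤ) :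
    chord n (a - b) * chord n (a + b) * (chord n (b - a) * chord n (b + a))
      = 16 * sin (π * (a - b) / n) ^ 2 * sin (π * (a + b) / n) ^ 2 := by
  rw [← neg_sub a, chord_neg, add_comm b]
  have hdiff := sq_chord n (a - b)
  have hsum := sq_chord n (a + b)
  push_cast at hdiff hsum
  linear_combination chord n (a + b) ^ 2 * hdiff + 4 * sin (π * (a - b) / n) ^ 2 * hsum

theorem chord_eq_norm_sub (n a b : ℕ) :
    chord n (a - b)
      = ‖Complex.exp (2 * π * Complex.I / n) ^ a - Complex.exp (2 * π * Complex.I / n) ^ b‖ := by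
  have hpow (m : ℕ) : Complex.exp (2 * π * Complex.I / n) ^ m
      = Complex.exp (Complex.I * (2 * π * m / n : ℝ)) := by
    rw [← Complex.exp_nat_mul]
    congr 1
    push_cast
    ring
  have hsplit : Complex.I * (2 * π * a / n : ℝ)
      = Complex.I * (2 * π * ((a - b : ℤ) : ℝ) / n : ℝ) + Complex.I * (2 * π * b / n : ℝ) := by
    push_cast
    ring
  rw [hpow, hpow, hsplit, Complex.exp_add, ← sub_one_mul, norm_mul,
    Complex.norm_exp_I_mul_ofReal, mul_one, Complex.norm_exp_I_mul_ofReal_sub_one, norm_mul,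
    Real.norm_eq_abs, chord]
  congr 2
  · norm_num
  · congr 1; ring

theorem prod_chord_sub_erase {n a : ℕ} (ha : a < n) :
    ∏ k ∈ (range n).erase a, chord n (a - k) = n := by
  have hζ := Complex.isPrimitiveRoot_exp n (by omega)
  have := congrArg norm (hζ.prod_pow_sub_pow_erase ha)
  simpa [norm_prod, chord_eq_norm_sub, hζ.norm'_eq_one (by omega)] using this

section HalfTurn

variable {s : ℕ}

theorem chord_half_turn (hs : s ≠ 0) : chord (2 * s) s = 2 := by
  have : π * ((s : ℤ) : ℝ) / ((2 * s : ℕ) : ℝ) = π / 2 := by push_cast; field_simp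
  rw [chord, this, sin_pi_div_two, abs_one, mul_one]

theorem chord_sub_half_turn (k : ℤ) : chord (2 * s) (k - s) = chord (2 * s) (k + s) := by
  rw [← chord_sub_self _ (k + s)]
  congr 1
  push_cast
  ring

theorem chord_double (k : ℤ) : chord (2 * s) (2 * k) = chord (2 * s) k * chord (2 * s) (k + s) := by
  rcases eq_or_ne s 0 with rfl | hs
  · simp [chord]
  have hk : π * ((2 * k : ℤ) : ℝ) / ((2 * s : ℕ) : ℝ) = 2 * (π * k / (2 * s : ℕ)) := by
    push_cast
    ring
  have hks : π * ((k + s : ℤ) : ℝ) / ((2 * s : ℕ) : ℝ) = π * k / (2 * s : ℕ) + π / 2 := by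
    push_cast
    field_simp
  simp only [chord, hk, hks, sin_two_mul, sin_add_pi_div_two, abs_mul]
  norm_num
  ring

/-- The vertices `ζ^k`, `s < k < 2s`, are the conjugates `ζ^(-b)`, `0 < b < s`, at distance
`chord (a + b)` from `ζ^a`. -/
theorem prod_chord_sub_mul_prod_chord_add {a : ℕ} (hs : s ≠ 0) (ha : a ≤ s) :
    (∏ b ∈ (range (s + 1)).erase a, chord (2 * s) (a - b)) * ∏ b ∈ Ico 1 s, chord (2 * s) (a + b)
      = 2 * s := by
  have hsplit : (range (2 * s)).erase a = (range (s + 1)).erase a ∪ Ico (s + 1) (2 * s) := by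
    ext
    simp only [mem_erase, mem_range, mem_union, mem_Ico]
    omega
  have hreflect : ∏ k ∈ Ico (s + 1) (2 * s), chord (2 * s) (a - k)
      = ∏ b ∈ Ico 1 s, chord (2 * s) (a + b) := by
    rw [show Ico (s + 1) (2 * s) = Ico (2 * s + 1 - s) (2 * s + 1 - 1) by congr 1; omega,
      ← prod_Ico_reflect _ _ (by omega)]
    refine prod_congr rfl fun b hb => ?_
    rw [mem_Ico] at hb
    rw [Nat.cast_sub (by omega), ← chord_sub_self _ (a + b)]
    congr 1
    push_cast
    ring
  rw [← hreflect, ← prod_union (by simp [disjoint_left]; omega), ← hsplit]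
  exact_mod_cast prod_chord_sub_erase (by omega)

theorem prod_chord_add_half_turn_sq (hs : s ≠ 0) :
    ∏ a ∈ Ico 1 s, chord (2 * s) (a + s) ^ 2 = s := by
  have h := prod_chord_sub_mul_prod_chord_add hs le_rfl
  rw [range_add_one, erase_insert notMem_range_self, range_eq_Ico,
    prod_eq_prod_Ico_succ_bot (Nat.pos_of_ne_zero hs)] at h
  have hsym (b : ℕ) : chord (2 * s) (s - b) = chord (2 * s) (b + s) := by
    rw [← chord_neg, neg_sub, chord_sub_half_turn]
  simp only [hsym, Nat.cast_zero, zero_add, sub_zero, add_comm (s : ℤ), chord_half_turn hs] at h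
  rw [prod_pow]
  linear_combination h / 2

noncomputable def chordRowProd (s a : ℕ) : ℝ :=
  ∏ b ∈ (range s).erase a, chord (2 * s) (a - b) * chord (2 * s) (a + b)

theorem chordRowProd_zero (hs : s ≠ 0) : chordRowProd s 0 = s := by
  have h := prod_chord_sub_mul_prod_chord_add hs (Nat.zero_le s)
  have hIco (m : ℕ) : (range m).erase 0 = Ico 1 m := by
    ext
    simp only [mem_erase, mem_range, mem_Ico]
    omega
  rw [hIco, prod_Ico_succ_top (by omega)] at h
  simp only [Nat.cast_zero, zero_sub, zero_add, chord_neg, chord_half_turn hs] at h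
  simp only [chordRowProd, hIco, Nat.cast_zero, zero_sub, zero_add, chord_neg, prod_mul_distrib]
  linear_combination h / 2

theorem chordRowProd_mul_chord_sq {a : ℕ} (ha : 0 < a) (has : a < s) :
    chordRowProd s a * chord (2 * s) (a + s) ^ 2 = 2 * s := by
  have hfold := prod_chord_sub_mul_prod_chord_add (by omega) has.le
  rw [range_add_one, erase_insert_of_ne (by omega), prod_insert (by simp),
    chord_sub_half_turn] at hfold
  have hrange : ∏ b ∈ range s, chord (2 * s) (a + b)
      = (∏ b ∈ Ico 1 s, chord (2 * s) (a + b)) * chord (2 * s) a := by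
    rw [range_eq_Ico, prod_eq_prod_Ico_succ_bot (by omega), Nat.cast_zero, add_zero, mul_comm]
  have hshift : ∏ b ∈ Ico 1 s, chord (2 * s) (a + b)
      = (∏ b ∈ (range s).erase a, chord (2 * s) (a + b)) * chord (2 * s) (a + s) := by
    have h := (mul_prod_erase _ (fun b : ℕ => chord (2 * s) (a + b)) (mem_range.2 has)).symm
    rw [hrange, ← two_mul, chord_double] at h
    apply mul_right_cancel₀ (chord_pos (n := 2 * s) (k := a) (by omega) (by omega)).ne'
    linear_combination h
  rw [hshift] at hfold
  rw [chordRowProd, prod_mul_distrib]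
  linear_combination hfold

end HalfTurn

theorem verlinde_Ds_Us_general (s : ℕ) :
    (∏ p ∈ (Finset.range s).offDiag.filter (fun p => p.1 < p.2),
        (16 * Real.sin (Real.pi * ((p.1 : ℝ) - (p.2 : ℝ)) / (2 * s)) ^ 2 *
          Real.sin (Real.pi * ((p.1 : ℝ) + (p.2 : ℝ)) / (2 * s)) ^ 2)) =
      (2 * (s : ℝ)) ^ (s - 1) := by
  rcases Nat.eq_zero_or_pos s with rfl | hs
  · simp
  have hrows : (∏ a ∈ Ico 1 s, chordRowProd s a) * s = (2 * s) ^ (s - 1) := by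
    have h : ∏ a ∈ Ico 1 s, chordRowProd s a * chord (2 * s) (a + s) ^ 2
        = ∏ a ∈ Ico 1 s, (2 * s : ℝ) :=
      prod_congr rfl fun a ha => chordRowProd_mul_chord_sq (mem_Ico.1 ha).1 (mem_Ico.1 ha).2
    rwa [prod_mul_distrib, prod_chord_add_half_turn_sq hs.ne', prod_const, Nat.card_Ico] at h
  calc _ = ∏ p ∈ (range s).offDiag, chord (2 * s) (p.1 - p.2) * chord (2 * s) (p.1 + p.2) := by
        rw [← prod_offDiag_filter_lt_mul_swap]
        refine prod_congr rfl fun p _ => ?_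
        have h := chord_sub_mul_chord_add_mul_swap (2 * s) p.1 p.2
        push_cast at h
        exact h.symm
    _ = ∏ a ∈ range s, chordRowProd s a := prod_offDiag_eq_prod_prod_erase _ _
    _ = chordRowProd s 0 * ∏ a ∈ Ico 1 s, chordRowProd s a := by
        rw [range_eq_Ico, prod_eq_prod_Ico_succ_bot hs]
    _ = _ := by
        rw [chordRowProd_zero hs.ne']
        linear_combination hrows

/-- For `s ≥ 3`, `r = 2s`, the product over unordered pairs `{a,b}` of
distinct elements of `U_s = {0,1,…,s−1}` of `16·sin²(π(a−b)/r)·sin²(π(a+b)/r)`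
equals `r^(s−1)`. -/
theorem verlinde_Ds_Us (s : ℕ) (hs : 3 ≤ s) :
    (∏ p ∈ (Finset.range s).offDiag.filter (fun p => p.1 < p.2),
        (16 * Real.sin (Real.pi * ((p.1 : ℝ) - (p.2 : ℝ)) / (2 * s)) ^ 2 *
          Real.sin (Real.pi * ((p.1 : ℝ) + (p.2 : ℝ)) / (2 * s)) ^ 2)) =
      (2 * (s : ℝ)) ^ (s - 1) :=
  verlinde_Ds_Us_general s
end

section
/- Let s ≥ 2 be an integer and set r = 2s+1. Let U_s = {a + 1/2 : a ∈ {0, 1, …, s−1}}. Then the product over all unordered pairs {u, v} of distinct elements of U_s of 16·sin²(π(u−v)/r)·sin²(π(u+v)/r), multiplied by the product over all u ∈ U_s of 4·sin²(πu/r), equals r^{s−1}. -/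
open Real Finset

/- Auxiliary definitions -/

noncomputable def fS (s m : ℕ) : ℝ := 4 * Real.sin (Real.pi * m / (2 * s + 1)) ^ 2

def cls (s : ℕ) (p : ℕ × ℕ) : ℕ :=
  if p.1 < p.2 then p.2 - p.1
  else if p.1 + p.2 + 1 ≤ s then p.1 + p.2 + 1 else 2 * s - p.1 - p.2

def idx (s : ℕ) (p : ℕ × ℕ) : ℕ :=
  if p.1 < p.2 then p.1
  else if p.1 + p.2 + 1 ≤ s then s - (p.1 + p.2 + 1) + p.2
  else p.1 + p.2 - s + (2 * s - p.1 - p.2) / 2 + (s - 1 - p.1)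

def psi (s : ℕ) (q : ℕ × ℕ) : ℕ × ℕ :=
  let y := q.1 + 1
  if q.2 < s - y then (q.2, q.2 + y)
  else if q.2 < s - y + y / 2 then (y - 1 - (q.2 - (s - y)), q.2 - (s - y))
  else (s - 1 - (q.2 - (s - y) - y / 2), s - y + 1 + (q.2 - (s - y) - y / 2))

/- Complex pairing lemma -/

lemma pair_complex (r j : ℕ) (hr : 0 < r) (hj : j ≤ r) :
    (1 - Complex.exp (2 * Real.pi * Complex.I / r) ^ j) *
      (1 - Complex.exp (2 * Real.pi * Complex.I / r) ^ (r - j)) =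
    ((4 * Real.sin (Real.pi * j / r) ^ 2 : ℝ) : ℂ) := by
  have hrne : (r : ℂ) ≠ 0 := by exact_mod_cast hr.ne'
  set θ : ℝ := 2 * Real.pi * j / r with hθ
  have h1 : Complex.exp (2 * Real.pi * Complex.I / r) ^ j = Complex.exp (θ * Complex.I) := by
    rw [← Complex.exp_nat_mul]
    congr 1
    push_cast [hθ]
    field_simp
  have h2 : Complex.exp (2 * Real.pi * Complex.I / r) ^ (r - j) = Complex.exp (-θ * Complex.I) := by
    have : Complex.exp (2 * Real.pi * Complex.I / r) ^ (r - j) *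
        Complex.exp (2 * Real.pi * Complex.I / r) ^ j = 1 := by
      rw [← pow_add, Nat.sub_add_cancel hj, ← Complex.exp_nat_mul]
      rw [show (r : ℂ) * (2 * Real.pi * Complex.I / r) = 2 * Real.pi * Complex.I by field_simp]
      exact Complex.exp_two_pi_mul_I
    have h3 : Complex.exp (-θ * Complex.I) * Complex.exp (θ * Complex.I) = 1 := by
      rw [← Complex.exp_add]
      norm_num
    rw [h1] at this
    exact mul_right_cancel₀ (Complex.exp_ne_zero _) (this.trans h3.symm)
  rw [h1, h2]
  have hcos : Complex.exp (θ * Complex.I) + Complex.exp (-θ * Complex.I) = 2 * Complex.cos θ := by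
    rw [Complex.cos]; ring
  have hexp : Complex.exp (θ * Complex.I) * Complex.exp (-θ * Complex.I) = 1 := by
    rw [← Complex.exp_add]; ring_nf; exact Complex.exp_zero
  have key : (1 - Complex.exp (θ * Complex.I)) * (1 - Complex.exp (-θ * Complex.I)) =
      2 - 2 * Complex.cos θ := by
    linear_combination hexp - hcos
  rw [key, ← Complex.ofReal_cos]
  have : (4 * Real.sin (Real.pi * j / r) ^ 2 : ℝ) = 2 - 2 * Real.cos θ := by
    rw [Real.sin_sq_eq_half_sub]
    rw [show 2 * (Real.pi * j / r) = θ by rw [hθ]; ring]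
    ring
  rw [this]
  push_cast
  ring

/- Master product: ∏_{k=1}^{s} 4 sin²(πk/(2s+1)) = 2s+1 -/

lemma masterF (s : ℕ) (hs : 1 ≤ s) :
    ∏ k ∈ Finset.range s, fS s (k + 1) = 2 * (s : ℝ) + 1 := by
  set r : ℕ := 2 * s + 1 with hr
  set μ : ℂ := Complex.exp (2 * Real.pi * Complex.I / r) with hμ
  have hprim : IsPrimitiveRoot μ r := Complex.isPrimitiveRoot_exp r (by omega)
  have hbig : ∏ k ∈ Finset.range (2 * s), (1 - μ ^ (k + 1)) = ((2 * s : ℕ) : ℂ) + 1 := by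
    have := hprim.prod_one_sub_pow_eq_order (n := 2 * s)
    exact_mod_cast this
  rw [show 2 * s = s + s from by ring, Finset.prod_range_add] at hbig
  rw [← Finset.prod_range_reflect (fun k => (1 - μ ^ (s + k + 1)))] at hbig
  rw [← Finset.prod_mul_distrib] at hbig
  have hptwise : ∀ k ∈ Finset.range s,
      (1 - μ ^ (k + 1)) * (1 - μ ^ (s + (s - 1 - k) + 1)) =
      ((fS s (k + 1) : ℝ) : ℂ) := by
    intro k hk
    rw [Finset.mem_range] at hk
    have h1 : s + (s - 1 - k) + 1 = r - (k + 1) := by omega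
    rw [h1, hμ]
    have := pair_complex r (k + 1) (by omega) (by omega)
    rw [this]
    norm_num [fS, hr]
  rw [Finset.prod_congr rfl hptwise] at hbig
  rw [← Complex.ofReal_prod] at hbig
  have : ((∏ k ∈ Finset.range s, fS s (k + 1) : ℝ) : ℂ) =
      ((2 * (s : ℝ) + 1 : ℝ) : ℂ) := by rw [hbig]; push_cast; ring
  exact Complex.ofReal_inj.mp this

/- Reflection symmetry -/

lemma fS_refl (s m : ℕ) (hm : m ≤ 2 * s + 1) : fS s (2 * s + 1 - m) = fS s m := by
  unfold fS
  have hc : ((2 * s + 1 - m : ℕ) : ℝ) = 2 * s + 1 - m := by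
    push_cast [Nat.cast_sub hm]; ring
  rw [hc]
  have hR : (2 * (s : ℝ) + 1) ≠ 0 := by positivity
  have : Real.pi * (2 * (s : ℝ) + 1 - m) / (2 * s + 1) =
      Real.pi - Real.pi * m / (2 * s + 1) := by field_simp
  rw [this, Real.sin_pi_sub]

/- Diagonal product equals 1 -/

lemma diag_one (s : ℕ) (hs : 1 ≤ s) :
    ∏ a ∈ Finset.range s, (4 * Real.sin (Real.pi * ((a : ℝ) + 1 / 2) / (2 * s + 1)) ^ 2) = 1 := by
  have hC : ∏ a ∈ Finset.range s,
      (4 * Real.cos (Real.pi * ((a : ℝ) + 1 / 2) / (2 * s + 1)) ^ 2) = 2 * (s : ℝ) + 1 := by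
    have step1 : ∀ a ∈ Finset.range s,
        (4 * Real.cos (Real.pi * ((a : ℝ) + 1 / 2) / (2 * s + 1)) ^ 2) = fS s (s - a) := by
      intro a ha
      rw [Finset.mem_range] at ha
      unfold fS
      have hc : ((s - a : ℕ) : ℝ) = s - a := by push_cast [Nat.cast_sub ha.le]; ring
      rw [hc]
      have : Real.pi * ((s:ℝ) - a) / (2 * s + 1) =
          Real.pi / 2 - Real.pi * ((a : ℝ) + 1 / 2) / (2 * s + 1) := by
        field_simp; ring
      rw [this, Real.sin_pi_div_two_sub]
    rw [Finset.prod_congr rfl step1]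
    rw [← Finset.prod_range_reflect (fun a => fS s (s - a)) s]
    rw [← masterF s hs]
    apply Finset.prod_congr rfl
    intro j hj
    rw [Finset.mem_range] at hj
    congr 1
    omega
  have hDC : (∏ a ∈ Finset.range s,
        (4 * Real.sin (Real.pi * ((a : ℝ) + 1 / 2) / (2 * s + 1)) ^ 2)) *
      (∏ a ∈ Finset.range s,
        (4 * Real.cos (Real.pi * ((a : ℝ) + 1 / 2) / (2 * s + 1)) ^ 2)) = 2 * (s : ℝ) + 1 := by
    rw [← Finset.prod_mul_distrib]
    have step : ∀ a ∈ Finset.range s,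
        (4 * Real.sin (Real.pi * ((a : ℝ) + 1 / 2) / (2 * s + 1)) ^ 2) *
          (4 * Real.cos (Real.pi * ((a : ℝ) + 1 / 2) / (2 * s + 1)) ^ 2) =
        fS s (2 * a + 1) := by
      intro a _
      unfold fS
      have h2 : Real.pi * ((2 * a + 1 : ℕ) : ℝ) / (2 * s + 1) =
          2 * (Real.pi * ((a : ℝ) + 1 / 2) / (2 * s + 1)) := by push_cast; ring
      rw [h2, Real.sin_two_mul]
      ring
    rw [Finset.prod_congr rfl step]
    rw [← masterF s hs]
    apply Finset.prod_nbij' (fun a => if 2 * a + 1 ≤ s then 2 * a else 2 * s - 2 * a - 1)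
      (fun k => if (k + 1) % 2 = 1 then k / 2 else s - (k + 1) / 2)
    · intro a ha; rw [Finset.mem_range] at ha ⊢; split_ifs <;> omega
    · intro k hk; rw [Finset.mem_range] at hk ⊢; split_ifs <;> omega
    · intro a ha; rw [Finset.mem_range] at ha; split_ifs <;> omega
    · intro k hk; rw [Finset.mem_range] at hk; split_ifs <;> omega
    · intro a ha
      rw [Finset.mem_range] at ha
      split_ifs with h
      · norm_num
      · have h1 : 2 * s - 2 * a - 1 + 1 = 2 * s + 1 - (2 * a + 1) := by omega
        rw [h1, fS_refl s (2 * a + 1) (by omega)]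
  rw [hC] at hDC
  have h1 : (2 * (s : ℝ) + 1) ≠ 0 := by positivity
  exact mul_right_cancel₀ h1 (hDC.trans (one_mul _).symm)

/- Pairwise product -/

lemma pairwise_prod (s : ℕ) (hs : 2 ≤ s) :
    ∏ p ∈ (Finset.range s).offDiag, fS s (cls s p) = (2 * (s : ℝ) + 1) ^ (s - 1) := by
  have key : ∏ p ∈ (Finset.range s).offDiag, fS s (cls s p) =
      ∏ q ∈ (Finset.range s) ×ˢ (Finset.range (s - 1)), fS s (q.1 + 1) := by
    apply Finset.prod_nbij' (fun p => (cls s p - 1, idx s p)) (psi s)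
    · rintro ⟨a, b⟩ h
      simp only [Finset.mem_offDiag, Finset.mem_range] at h
      simp only [Finset.mem_product, Finset.mem_range, cls, idx]
      split_ifs <;> omega
    · rintro ⟨y0, j⟩ h
      simp only [Finset.mem_product, Finset.mem_range] at h
      simp only [Finset.mem_offDiag, Finset.mem_range, psi]
      split_ifs <;> omega
    · rintro ⟨a, b⟩ h
      simp only [Finset.mem_offDiag, Finset.mem_range] at h
      simp only [psi, cls, idx]
      split_ifs <;> simp only [Prod.mk.injEq, true_and, and_true] <;> omega
    · rintro ⟨y0, j⟩ h
      simp only [Finset.mem_product, Finset.mem_range] at h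
      simp only [psi, cls, idx]
      split_ifs <;> simp only [Prod.mk.injEq, true_and, and_true] <;> omega
    · rintro ⟨a, b⟩ h
      simp only [Finset.mem_offDiag, Finset.mem_range] at h
      congr 1
      simp only [cls]
      split_ifs <;> omega
  rw [key, Finset.prod_product]
  simp only [Finset.prod_const, Finset.card_range]
  rw [Finset.prod_pow, masterF s (by omega)]


/-- For `s ≥ 2`, `r = 2s+1`, with `U_s = {a + 1/2 : a ∈ {0,…,s−1}}`
(the elements being indexed by `a ∈ {0,…,s−1}` via the injective map `a ↦ a + 1/2`),
the product over unordered pairs `{u,v}` of distinct elements of `U_s` of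
`16·sin²(π(u−v)/r)·sin²(π(u+v)/r)`, times the product over `u ∈ U_s` of
`4·sin²(πu/r)`, equals `r^(s−1)`. -/
theorem verlinde_Bs_Us (s : ℕ) (hs : 2 ≤ s) :
    (∏ p ∈ (Finset.range s).offDiag.filter (fun p => p.1 < p.2),
        (16 * Real.sin (Real.pi * (((p.1 : ℝ) + 1 / 2) - ((p.2 : ℝ) + 1 / 2)) / (2 * s + 1)) ^ 2 *
          Real.sin (Real.pi * (((p.1 : ℝ) + 1 / 2) + ((p.2 : ℝ) + 1 / 2)) / (2 * s + 1)) ^ 2)) *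
      (∏ a ∈ Finset.range s,
        (4 * Real.sin (Real.pi * ((a : ℝ) + 1 / 2) / (2 * s + 1)) ^ 2)) =
      (2 * (s : ℝ) + 1) ^ (s - 1) := by
  rw [diag_one s (by omega), mul_one]
  -- step: the filtered product equals the offDiag product of fS ∘ cls
  have hsplit := Finset.prod_filter_mul_prod_filter_not (Finset.range s).offDiag
    (fun p => p.1 < p.2) (fun p => fS s (cls s p))
  have hswap : ∏ p ∈ (Finset.range s).offDiag.filter (fun p => ¬ p.1 < p.2),
      fS s (cls s p) =
      ∏ p ∈ (Finset.range s).offDiag.filter (fun p => p.1 < p.2),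
      fS s (cls s (p.2, p.1)) := by
    apply Finset.prod_nbij' (fun p => (p.2, p.1)) (fun p => (p.2, p.1))
    · rintro ⟨a, b⟩ h
      simp only [Finset.mem_filter, Finset.mem_offDiag, Finset.mem_range] at h ⊢
      omega
    · rintro ⟨a, b⟩ h
      simp only [Finset.mem_filter, Finset.mem_offDiag, Finset.mem_range] at h ⊢
      omega
    · rintro ⟨a, b⟩ _; rfl
    · rintro ⟨a, b⟩ _; rfl
    · rintro ⟨a, b⟩ _; rfl
  rw [hswap, ← Finset.prod_mul_distrib] at hsplit
  rw [← pairwise_prod s hs, ← hsplit]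
  apply Finset.prod_congr rfl
  rintro ⟨a, b⟩ h
  simp only [Finset.mem_filter, Finset.mem_offDiag, Finset.mem_range] at h
  obtain ⟨⟨ha, hb, hne⟩, hab⟩ := h
  have hc1 : cls s (a, b) = b - a := by simp only [cls]; split_ifs <;> omega
  have hc2 : fS s (cls s (b, a)) = fS s (a + b + 1) := by
    simp only [cls]
    split_ifs with h1 h2
    · omega
    · rw [Nat.add_comm b a]
    · have : 2 * s - b - a = 2 * s + 1 - (a + b + 1) := by omega
      rw [this, fS_refl s (a + b + 1) (by omega)]
  rw [hc1, hc2]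
  unfold fS
  have e1 : Real.pi * (((a : ℝ) + 1 / 2) - ((b : ℝ) + 1 / 2)) / (2 * s + 1) =
      -(Real.pi * ((b - a : ℕ) : ℝ) / (2 * s + 1)) := by
    rw [Nat.cast_sub hab.le]
    push_cast
    ring
  have e2 : Real.pi * (((a : ℝ) + 1 / 2) + ((b : ℝ) + 1 / 2)) / (2 * s + 1) =
      Real.pi * ((a + b + 1 : ℕ) : ℝ) / (2 * s + 1) := by push_cast; ring
  rw [e1, e2, Real.sin_neg]
  ring
end
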